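/- arXiv:2505.02036 — 2 statements merged into one kernel-verified Lean document; each statement's English description precedes it below -/
import Mathlib

section
/- Let a < b be real numbers, p ≥ 2, and let u : ℝ → ℝ be differentiable on [a,b] with continuous derivative u′ on [a,b]. Then ∫_a^b |u(t)|^p dt ≤ ( (b−a)^{−1} ∫_a^b u² dt + 2 (∫_a^b u² dt)^{1/2} (∫_a^b u′² dt)^{1/2} )^{(p−2)/2} · ∫_a^b u(t)² dt. -/
open MeasureTheory Set intervalIntegral
open scoped Interval

/-!
By the mean value theorem for integrals, `u c ^ 2` is the mean of `u ^ 2` over `[a, b]` for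
some `c ∈ [a, b]`. For `x ∈ [a, b]`, the fundamental theorem of calculus and Cauchy–Schwarz give
`u x ^ 2 - u c ^ 2 = ∫ t in c..x, 2 * u t * u' t ≤ 2 * ‖u‖₂ * ‖u'‖₂`,
so `u ^ 2 ≤ S` on `[a, b]`, where `S` is the base of the power on the right-hand side. Hence
`|u| ^ p = (u ^ 2) ^ ((p - 2) / 2) * u ^ 2 ≤ S ^ ((p - 2) / 2) * u ^ 2` pointwise; integrate.
-/

theorem integral_abs_mul_abs_le_sqrt_mul_sqrt {α : Type*} [MeasurableSpace α] {μ : Measure α}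
    {f g : α → ℝ} (hf : MemLp f 2 μ) (hg : MemLp g 2 μ) :
    ∫ x, |f x| * |g x| ∂μ ≤ √(∫ x, f x ^ 2 ∂μ) * √(∫ x, g x ^ 2 ∂μ) := by
  have h := integral_mul_norm_le_Lp_mul_Lq (p := 2) (q := 2) .two_two
    (by simpa using hf) (by simpa using hg)
  simpa only [Real.norm_eq_abs, Real.rpow_two, sq_abs, Real.sqrt_eq_rpow, one_div] using h

theorem ContinuousOn.memLp_two_restrict_Ioc {f : ℝ → ℝ} {a b : ℝ}
    (hf : ContinuousOn f (Icc a b)) :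
    MemLp f 2 (volume.restrict (Ioc a b)) :=
  (memLp_two_iff_integrable_sq
    ((hf.mono Ioc_subset_Icc_self).aestronglyMeasurable measurableSet_Ioc)).2
    (((hf.pow 2).integrableOn_Icc).mono_set Ioc_subset_Icc_self)

theorem intervalIntegral_abs_mul_abs_le_sqrt_mul_sqrt {f g : ℝ → ℝ} {a b : ℝ} (hab : a ≤ b)
    (hf : ContinuousOn f (Icc a b)) (hg : ContinuousOn g (Icc a b)) :
    ∫ t in a..b, |f t| * |g t| ≤ √(∫ t in a..b, f t ^ 2) * √(∫ t in a..b, g t ^ 2) := by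
  simp only [integral_of_le hab]
  exact integral_abs_mul_abs_le_sqrt_mul_sqrt
    hf.memLp_two_restrict_Ioc hg.memLp_two_restrict_Ioc

theorem intervalIntegral_le_integral_abs_of_mem_Icc {f : ℝ → ℝ} {a b x y : ℝ}
    (hf : IntervalIntegrable f volume a b) (hx : x ∈ Icc a b) (hy : y ∈ Icc a b) :
    ∫ t in x..y, f t ≤ ∫ t in a..b, |f t| := by
  have hsub : Ι x y ⊆ Ioc a b := by
    rw [uIoc]; exact Ioc_subset_Ioc (le_min hx.1 hy.1) (max_le hx.2 hy.2)
  calc ∫ t in x..y, f t ≤ ∫ t in Ι x y, ‖f t‖ :=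
        (Real.le_norm_self _).trans norm_integral_le_integral_norm_uIoc
    _ ≤ ∫ t in Ioc a b, ‖f t‖ :=
        setIntegral_mono_set hf.1.norm (.of_forall fun _ => norm_nonneg _) hsub.eventuallyLE
    _ = ∫ t in a..b, |f t| := by rw [integral_of_le (hx.1.trans hx.2)]; rfl

theorem integral_eq_sub_of_hasDerivWithinAt_Icc {f f' : ℝ → ℝ} {a b x y : ℝ}
    (hf : ∀ t ∈ Icc a b, HasDerivWithinAt f (f' t) (Icc a b) t)
    (hf' : IntervalIntegrable f' volume a b) (hx : x ∈ Icc a b) (hy : y ∈ Icc a b) :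
    ∫ t in x..y, f' t = f y - f x := by
  have hsub : uIcc x y ⊆ Icc a b := uIcc_subset_Icc hx hy
  refine integral_eq_sub_of_hasDeriv_right
    (fun t ht => (hf t (hsub ht)).continuousWithinAt.mono hsub) (fun t ht => ?_)
    (hf'.mono_set (uIcc_subset_uIcc (Icc_subset_uIcc hx) (Icc_subset_uIcc hy)))
  have ht' : t ∈ Ioo a b :=
    ⟨(le_min hx.1 hy.1).trans_lt ht.1, ht.2.trans_le (max_le hx.2 hy.2)⟩
  exact ((hf t (Ioo_subset_Icc_self ht')).hasDerivAt (Icc_mem_nhds ht'.1 ht'.2)).hasDerivWithinAt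

theorem sq_le_average_add_of_hasDerivWithinAt {u u' : ℝ → ℝ} {a b x : ℝ} (hab : a < b)
    (hu : ∀ t ∈ Icc a b, HasDerivWithinAt u (u' t) (Icc a b) t)
    (hu' : ContinuousOn u' (Icc a b)) (hx : x ∈ Icc a b) :
    u x ^ 2 ≤ (b - a)⁻¹ * (∫ t in a..b, u t ^ 2)
      + 2 * √(∫ t in a..b, u t ^ 2) * √(∫ t in a..b, u' t ^ 2) := by
  have hcu : ContinuousOn u (Icc a b) := fun t ht => (hu t ht).continuousWithinAt
  obtain ⟨c, hc, hc_avg⟩ := exists_eq_interval_average hab.ne (f := fun t => u t ^ 2)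
    (by rw [uIcc_of_le hab.le]; exact hcu.pow 2)
  rw [interval_average_eq, smul_eq_mul] at hc_avg
  rw [uIoo_of_le hab.le] at hc
  have hderiv : ∀ t ∈ Icc a b,
      HasDerivWithinAt (fun t => u t ^ 2) (2 * u t * u' t) (Icc a b) t := fun t ht =>
    ((hu t ht).fun_pow 2).congr_deriv (by ring)
  have hint : IntervalIntegrable (fun t => 2 * u t * u' t) volume a b :=
    ((continuousOn_const.mul hcu).mul hu').intervalIntegrable_of_Icc hab.le
  calc u x ^ 2 = u c ^ 2 + ∫ t in c..x, 2 * u t * u' t := by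
        rw [integral_eq_sub_of_hasDerivWithinAt_Icc hderiv hint (Ioo_subset_Icc_self hc) hx]
        ring
    _ ≤ (b - a)⁻¹ * (∫ t in a..b, u t ^ 2) + ∫ t in a..b, |2 * u t * u' t| :=
        add_le_add hc_avg.le
          (intervalIntegral_le_integral_abs_of_mem_Icc hint (Ioo_subset_Icc_self hc) hx)
    _ = (b - a)⁻¹ * (∫ t in a..b, u t ^ 2) + 2 * ∫ t in a..b, |u t| * |u' t| := by
        simp only [abs_mul, abs_two, mul_assoc, intervalIntegral.integral_const_mul]
    _ ≤ _ := by
        rw [mul_assoc 2]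
        gcongr
        exact intervalIntegral_abs_mul_abs_le_sqrt_mul_sqrt hab.le hcu hu'

theorem abs_rpow_le_rpow_mul_sq {x M p : ℝ} (hp : 2 ≤ p) (hx : x ^ 2 ≤ M) :
    |x| ^ p ≤ M ^ ((p - 2) / 2) * x ^ 2 := by
  calc |x| ^ p = (|x| ^ (2 : ℝ)) ^ ((p - 2) / 2) * |x| ^ (2 : ℝ) := by
        rw [← Real.rpow_mul (abs_nonneg x), ← Real.rpow_add' (abs_nonneg x) (by linarith)]
        ring_nf
    _ = (x ^ 2) ^ ((p - 2) / 2) * x ^ 2 := by rw [Real.rpow_two, sq_abs]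
    _ ≤ M ^ ((p - 2) / 2) * x ^ 2 := by gcongr

/-- One-dimensional Gagliardo–Nirenberg-type inequality on a bounded interval:
for `p ≥ 2` and `u` differentiable on `[a,b]` with continuous derivative `u'`,
`∫ |u|^p ≤ ((b−a)⁻¹ ∫ u² + 2 (∫ u²)^{1/2} (∫ u'²)^{1/2})^{(p−2)/2} · ∫ u²`. -/
theorem gagliardo_nirenberg_interval (a b : ℝ) (hab : a < b) (p : ℝ) (hp : 2 ≤ p)
    (u u' : ℝ → ℝ)
    (hu : ∀ x ∈ Set.Icc a b, HasDerivWithinAt u (u' x) (Set.Icc a b) x)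
    (hu' : ContinuousOn u' (Set.Icc a b)) :
    ∫ t in a..b, |u t| ^ p ≤
      ((b - a)⁻¹ * (∫ t in a..b, (u t) ^ 2)
        + 2 * Real.sqrt (∫ t in a..b, (u t) ^ 2) * Real.sqrt (∫ t in a..b, (u' t) ^ 2))
          ^ ((p - 2) / 2) * ∫ t in a..b, (u t) ^ 2 := by
  have hcu : ContinuousOn u (Icc a b) := fun t ht => (hu t ht).continuousWithinAt
  refine (integral_mono_on hab.le ?_ ?_ fun t ht => abs_rpow_le_rpow_mul_sq hp
    (sq_le_average_add_of_hasDerivWithinAt hab hu hu' ht)).trans_eq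
    (intervalIntegral.integral_const_mul _ _)
  · exact (hcu.abs.rpow_const fun _ _ => Or.inr (by linarith)).intervalIntegrable_of_Icc hab.le
  · exact ((hcu.pow 2).intervalIntegrable_of_Icc hab.le).const_mul _
end

section
/- Let (Ω, μ) be a measure space with μ(Ω) < ∞, let E be a finite-dimensional real normed vector space, and let r : E → ℝ be continuous with: (a) there exists C ≥ 0 such that |r(z)| ≤ C‖z‖² for all z ∈ E, and (b) r(z)/‖z‖² → 0 as ‖z‖ → ∞. Let (v_n) be a sequence of measurable functions Ω → E with sup_n ∫_Ω ‖v_n‖² dμ < ∞, and let (t_n) be positive reals with t_n → ∞. Then (1/t_n²) ∫_Ω r(t_n · v_n(x)) dμ(x) → 0 as n → ∞. -/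
open MeasureTheory Filter Topology
open scoped ENNReal

/-! Since `r` is `O(‖z‖²)` near the origin and `o(‖z‖²)` at infinity, for every `ε > 0` there
is `K` with `|r z| ≤ K + ε‖z‖²` on all of `E`. Integrating this at `z = tₙ vₙ` and dividing by
`tₙ²` bounds the `n`-th term by `K μ(Ω) / tₙ² + ε M`; the first summand tends to `0` and `ε`
is arbitrary. -/

lemma tendsto_zero_of_forall_abs_le_mul_add {α : Type*} {l : Filter α} {a b : α → ℝ} {c : ℝ}
    (hc : 0 ≤ c) (hb : Tendsto b l (𝓝 0)) (h : ∀ ε > 0, ∃ K, ∀ n, |a n| ≤ K * b n + ε * c) :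
    Tendsto a l (𝓝 0) := by
  rw [Metric.tendsto_nhds]
  intro ε hε
  obtain ⟨K, hK⟩ := h (ε / (2 * (c + 1))) (by positivity)
  have hKb : ∀ᶠ n in l, K * b n < ε / 2 := by
    have hKb0 := hb.const_mul K
    rw [mul_zero] at hKb0
    exact hKb0.eventually_lt_const (half_pos hε)
  have hεc : ε / (2 * (c + 1)) * c ≤ ε / 2 := by
    rw [div_mul_eq_mul_div, div_le_div_iff₀ (by positivity) two_pos]
    nlinarith
  filter_upwards [hKb] with n hn
  rw [Real.dist_eq, sub_zero]
  linarith [hK n]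

lemma exists_abs_le_add_mul_norm_sq {E : Type*} [SeminormedAddCommGroup E] {r : E → ℝ} {C : ℝ}
    (hC : 0 ≤ C) (hbound : ∀ z, |r z| ≤ C * ‖z‖ ^ 2)
    (hlim : Tendsto (fun z => r z / ‖z‖ ^ 2) (comap (fun z => ‖z‖) atTop) (𝓝 0))
    {ε : ℝ} (hε : 0 < ε) : ∃ K, ∀ z, |r z| ≤ K + ε * ‖z‖ ^ 2 := by
  have hsmall : ∀ᶠ z in comap (fun z => ‖z‖) atTop, |r z / ‖z‖ ^ 2| < ε := by
    simpa only [Real.dist_eq, sub_zero] using Metric.tendsto_nhds.1 hlim ε hε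
  obtain ⟨R, hR⟩ := eventually_atTop.1 ((eventually_comap.1 hsmall).and (eventually_gt_atTop 0))
  refine ⟨C * R ^ 2, fun z => ?_⟩
  rcases le_or_gt ‖z‖ R with hzR | hRz
  · have : C * ‖z‖ ^ 2 ≤ C * R ^ 2 := by gcongr
    nlinarith [hbound z, sq_nonneg ‖z‖]
  · obtain ⟨hfar, hpos⟩ := hR ‖z‖ hRz.le
    have hz2 : 0 < ‖z‖ ^ 2 := by positivity
    have hrz := hfar z rfl
    rw [abs_div, abs_of_pos hz2, div_lt_iff₀ hz2] at hrz
    nlinarith [sq_nonneg R]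

lemma abs_integral_le_mul_add_integral {Ω : Type*} [MeasurableSpace Ω] {μ : Measure Ω}
    [IsFiniteMeasure μ] {f g : Ω → ℝ} {K : ℝ} (hg : Integrable g μ) (hfg : ∀ x, |f x| ≤ K + g x) :
    |∫ x, f x ∂μ| ≤ K * μ.real Set.univ + ∫ x, g x ∂μ := by
  calc |∫ x, f x ∂μ| ≤ ∫ x, (K + g x) ∂μ :=
        norm_integral_le_of_norm_le (f := f) (g := fun x => K + g x)
          ((integrable_const K).add hg) (ae_of_all _ hfg)
    _ = K * μ.real Set.univ + ∫ x, g x ∂μ := by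
        rw [integral_add (integrable_const K) hg, integral_const, smul_eq_mul, mul_comm]

theorem remainder_integral_tendsto_zero_general {Ω E : Type*} [MeasurableSpace Ω]
    (μ : Measure Ω) [IsFiniteMeasure μ]
    [NormedAddCommGroup E] [NormedSpace ℝ E]
    (r : E → ℝ)
    (C : ℝ) (hC : 0 ≤ C) (hbound : ∀ z : E, |r z| ≤ C * ‖z‖ ^ 2)
    (hlim : Tendsto (fun z : E => r z / ‖z‖ ^ 2)
      (comap (fun z : E => ‖z‖) atTop) (nhds 0))
    (v : ℕ → Ω → E) (hv : ∀ n, AEStronglyMeasurable (v n) μ)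
    (M : ℝ≥0∞) (hMfin : M < ⊤)
    (hM : ∀ n, ∫⁻ x, ENNReal.ofReal (‖v n x‖ ^ 2) ∂μ ≤ M)
    (t : ℕ → ℝ) (htinf : Tendsto t atTop atTop) :
    Tendsto (fun n => (t n ^ 2)⁻¹ * ∫ x, r (t n • v n x) ∂μ) atTop (nhds 0) := by
  have hv2 : ∀ n, Integrable (fun x => ‖v n x‖ ^ 2) μ := fun n =>
    ⟨(hv n).norm.pow 2, (hasFiniteIntegral_iff_ofReal (ae_of_all _ fun x => by positivity)).2
      ((hM n).trans_lt hMfin)⟩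
  have hv2M : ∀ n, ∫ x, ‖v n x‖ ^ 2 ∂μ ≤ M.toReal := fun n => by
    rw [integral_eq_lintegral_of_nonneg_ae (ae_of_all _ fun x => by positivity) (hv2 n).1]
    exact ENNReal.toReal_mono hMfin.ne (hM n)
  refine tendsto_zero_of_forall_abs_le_mul_add (c := M.toReal) ENNReal.toReal_nonneg
    (tendsto_inv_atTop_zero.comp ((tendsto_pow_atTop two_ne_zero).comp htinf)) fun ε hε => ?_
  obtain ⟨K, hK⟩ := exists_abs_le_add_mul_norm_sq hC hbound hlim hε
  refine ⟨K * μ.real Set.univ, fun n => ?_⟩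
  have hpt : ∀ x, |r (t n • v n x)| ≤ K + ε * t n ^ 2 * ‖v n x‖ ^ 2 := fun x => by
    simpa only [norm_smul, Real.norm_eq_abs, mul_pow, sq_abs, mul_assoc] using hK (t n • v n x)
  calc |(t n ^ 2)⁻¹ * ∫ x, r (t n • v n x) ∂μ|
      = (t n ^ 2)⁻¹ * |∫ x, r (t n • v n x) ∂μ| := by rw [abs_mul, abs_of_nonneg (by positivity)]
    _ ≤ (t n ^ 2)⁻¹ * (K * μ.real Set.univ + ε * t n ^ 2 * ∫ x, ‖v n x‖ ^ 2 ∂μ) := by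
        gcongr
        simpa only [integral_const_mul] using
          abs_integral_le_mul_add_integral ((hv2 n).const_mul _) hpt
    _ ≤ (t n ^ 2)⁻¹ * (K * μ.real Set.univ + ε * t n ^ 2 * M.toReal) := by gcongr; exact hv2M n
    _ = K * μ.real Set.univ * (t n ^ 2)⁻¹ + ε * M.toReal * ((t n ^ 2)⁻¹ * t n ^ 2) := by ring
    _ ≤ K * μ.real Set.univ * (t n ^ 2)⁻¹ + ε * M.toReal :=
        add_le_add le_rfl (mul_le_of_le_one_right (by positivity) inv_mul_le_one)

/-- Limit (4.17) in the proof of Lemma 4.3: if `|r z| ≤ C‖z‖²`, `r z/‖z‖² → 0`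
as `‖z‖ → ∞`, the `v n` have uniformly bounded `L²`-norms on a finite measure
space, and `t n → ∞`, then `(1/t_n²) ∫ r(t_n v_n) dμ → 0`. -/
theorem remainder_integral_tendsto_zero {Ω E : Type*} [MeasurableSpace Ω]
    (μ : Measure Ω) [IsFiniteMeasure μ]
    [NormedAddCommGroup E] [NormedSpace ℝ E] [FiniteDimensional ℝ E]
    (r : E → ℝ) (hr : Continuous r)
    (C : ℝ) (hC : 0 ≤ C) (hbound : ∀ z : E, |r z| ≤ C * ‖z‖ ^ 2)
    (hlim : Tendsto (fun z : E => r z / ‖z‖ ^ 2)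
      (comap (fun z : E => ‖z‖) atTop) (nhds 0))
    (v : ℕ → Ω → E) (hv : ∀ n, AEStronglyMeasurable (v n) μ)
    (M : ℝ≥0∞) (hMfin : M < ⊤)
    (hM : ∀ n, ∫⁻ x, ENNReal.ofReal (‖v n x‖ ^ 2) ∂μ ≤ M)
    (t : ℕ → ℝ) (ht : ∀ n, 0 < t n) (htinf : Tendsto t atTop atTop) :
    Tendsto (fun n => (t n ^ 2)⁻¹ * ∫ x, r (t n • v n x) ∂μ) atTop (nhds 0) :=
  remainder_integral_tendsto_zero_general μ r C hC hbound hlim v hv M hMfin hM t htinf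
end
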